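/- arXiv:1004.2978 — 3 statements merged into one kernel-verified Lean document; each statement's English description precedes it below -/
import Mathlib

section
/- Assume N = 1. Then (i) an element ω ∈ Ω satisfies dω = 0 if and only if ω ∼ b₀₀ + ψ₁b₁₀ + χ₁b₀₁ + (c̃₃ψ₁ − c̃₁χ₁)a₁₀ + (c̃₃χ₁ − c̃₂ψ₁)a₀₁ + (c̃₃ψ₁χ₁ − ½c̃₁χ₁² − ½c̃₂ψ₁²)a₁₁ for some complex numbers b₀₀, b₁₀, b₀₁, a₁₀, a₀₁, a₁₁; and (ii) such a combination is ∼ 0 if and only if b₀₀ = b₁₀ = b₀₁ = a₁₀ = a₀₁ = a₁₁ = 0. -/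
/-!
D = 3 supersymmetry algebra cohomology.
`R3 N = ℂ[ψ₁,…,ψ_N, χ₁,…,χ_N]`, `Om3 N` is the free module with basis
`{1, c̃₁, c̃₂, c̃₃, c̃₁c̃₂, c̃₁c̃₃, c̃₂c̃₃, c̃₁c̃₂c̃₃}` (components 0,…,7), and
`d3` is the odd superderivation with `dc̃₁ = P`, `dc̃₂ = Q`, `dc̃₃ = S`, `d|_R = 0`.
-/

open MvPolynomial

noncomputable section

/-- The polynomial ring `ℂ[ψ₁,…,ψ_N, χ₁,…,χ_N]`; `Sum.inl i ↦ ψᵢ`, `Sum.inr i ↦ χᵢ`. -/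
abbrev R3 (N : ℕ) : Type := MvPolynomial (Fin N ⊕ Fin N) ℂ

/-- `Ω`: free `R3`-module with basis
`{1, c̃₁, c̃₂, c̃₃, c̃₁c̃₂, c̃₁c̃₃, c̃₂c̃₃, c̃₁c̃₂c̃₃}` (components 0,…,7). -/
abbrev Om3 (N : ℕ) : Type := Fin 8 → R3 N

/-- The ghost `ψᵢ`. -/
def ψ {N : ℕ} (i : Fin N) : R3 N := X (Sum.inl i)

/-- The ghost `χᵢ`. -/
def χ {N : ℕ} (i : Fin N) : R3 N := X (Sum.inr i)

/-- `P = Σ ψᵢ²`. -/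
def PP (N : ℕ) : R3 N := ∑ i, ψ i ^ 2

/-- `Q = Σ χᵢ²`. -/
def QQ (N : ℕ) : R3 N := ∑ i, χ i ^ 2

/-- `S = Σ ψᵢχᵢ`. -/
def SS (N : ℕ) : R3 N := ∑ i, ψ i * χ i

/-- The differential: the unique R-linear odd superderivation with
`dc̃₁ = P`, `dc̃₂ = Q`, `dc̃₃ = S` and `d|_R = 0`, written out in components:
`d(ω₀ + c̃₁ω₁ + c̃₂ω₂ + c̃₃ω₃ + c̃₁c̃₂ω₄ + c̃₁c̃₃ω₅ + c̃₂c̃₃ω₆ + c̃₁c̃₂c̃₃ω₇)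
 = Pω₁ + Qω₂ + Sω₃ + (Pc̃₂ − Qc̃₁)ω₄ + (Pc̃₃ − Sc̃₁)ω₅ + (Qc̃₃ − Sc̃₂)ω₆
   + (Pc̃₂c̃₃ − Qc̃₁c̃₃ + Sc̃₁c̃₂)ω₇`. -/
def d3 {N : ℕ} (ω : Om3 N) : Om3 N :=
  ![PP N * ω 1 + QQ N * ω 2 + SS N * ω 3,
    -(QQ N * ω 4) - SS N * ω 5,
    PP N * ω 4 - SS N * ω 6,
    PP N * ω 5 + QQ N * ω 6,
    SS N * ω 7,
    -(QQ N * ω 7),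
    PP N * ω 7,
    0]

/-- Embedding of `R` into `Ω` (coefficient of the basis element `1`). -/
def ofR3 {N : ℕ} (r : R3 N) : Om3 N := ![r, 0, 0, 0, 0, 0, 0, 0]

/-- `ω ∼ ω'` iff `ω − ω' = dρ` for some `ρ`. -/
def Equiv3 {N : ℕ} (ω ω' : Om3 N) : Prop := ∃ ρ, ω - ω' = d3 ρ

/-! ### auxiliary material -/

abbrev Rg : Type := R3 1
abbrev iψ : Fin 1 ⊕ Fin 1 := Sum.inl 0
abbrev iχ : Fin 1 ⊕ Fin 1 := Sum.inr 0

lemma PP1 : PP 1 = X iψ ^ 2 := by simp [PP, ψ]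
lemma QQ1 : QQ 1 = X iχ ^ 2 := by simp [QQ, χ]
lemma SS1 : SS 1 = X iψ * X iχ := by simp [SS, ψ, χ]

lemma hC2 : (C (1/2 : ℂ) : Rg) * 2 = 1 := by
  rw [show (2 : Rg) = C (2 : ℂ) by rw [map_ofNat], ← map_mul]
  norm_num

def phi (i : Fin 1 ⊕ Fin 1) : Rg →ₐ[ℂ] Rg :=
  aeval (fun j => if j = i then 0 else X j)

lemma phi_X (i j : Fin 1 ⊕ Fin 1) : phi i (X j) = if j = i then 0 else X j := by
  simp [phi]

lemma X_dvd_sub_phi (i : Fin 1 ⊕ Fin 1) (p : Rg) : X i ∣ p - phi i p := by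
  induction p using MvPolynomial.induction_on with
  | C a => simp [phi]
  | add p q hp hq => have := dvd_add hp hq; convert this using 1; rw [map_add]; ring
  | mul_X p j hp =>
    rw [map_mul, phi_X]
    by_cases h : j = i
    · subst h; simp only [eq_self_iff_true, if_true, mul_zero, sub_zero]
      exact ⟨p, by ring⟩
    · rw [if_neg h]
      have : p * X j - phi i p * X j = (p - phi i p) * X j := by ring
      rw [this]; exact hp.mul_right _

lemma X_dvd_iff_phi (i : Fin 1 ⊕ Fin 1) (p : Rg) : X i ∣ p ↔ phi i p = 0 := by
  constructor
  · rintro ⟨q, rfl⟩; rw [map_mul, phi_X, if_pos rfl, zero_mul]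
  · intro h
    have := X_dvd_sub_phi i p
    rwa [h, sub_zero] at this

lemma dvd_of_other_mul {i j : Fin 1 ⊕ Fin 1} (hij : j ≠ i) {f g : Rg}
    (h : X j * f = X i * g) : ∃ t, f = X i * t := by
  have h1 : X i ∣ X j * f := ⟨g, h⟩
  rw [X_dvd_iff_phi, map_mul, phi_X, if_neg hij] at h1
  have h2 : phi i f = 0 := by
    rcases mul_eq_zero.mp h1 with h | h
    · exact absurd h (X_ne_zero j)
    · exact h
  rw [← X_dvd_iff_phi] at h2
  exact h2

lemma dvd_of_other_sq_mul {i j : Fin 1 ⊕ Fin 1} (hij : j ≠ i) {f g : Rg}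
    (h : X j ^ 2 * f = X i * g) : ∃ t, f = X i * t := by
  have h1 : X i ∣ X j ^ 2 * f := ⟨g, h⟩
  rw [X_dvd_iff_phi, map_mul, map_pow, phi_X, if_neg hij] at h1
  have h2 : phi i f = 0 := by
    rcases mul_eq_zero.mp h1 with h | h
    · exact absurd h (pow_ne_zero 2 (X_ne_zero j))
    · exact h
  rw [← X_dvd_iff_phi] at h2
  exact h2

lemma Xcancel (i : Fin 1 ⊕ Fin 1) {f g : Rg} (h : X i * f = X i * g) : f = g :=
  mul_left_cancel₀ (X_ne_zero i) h

lemma sq_dvd_sq {f g : Rg} (h : X iψ ^ 2 * f = X iχ ^ 2 * g) :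
    ∃ w, f = X iχ ^ 2 * w ∧ g = X iψ ^ 2 * w := by
  obtain ⟨f1, hf1⟩ := dvd_of_other_sq_mul (by simp)
    (show X iψ ^ 2 * f = X iχ * (X iχ * g) by rw [h]; ring)
  subst hf1
  have h' : X iχ * (X iψ ^ 2 * f1) = X iχ * (X iχ * g) := by linear_combination h
  have h2 := Xcancel iχ h'
  obtain ⟨w, hw⟩ := dvd_of_other_sq_mul (by simp) h2
  subst hw
  refine ⟨w, by ring, ?_⟩
  have h3 : X iχ * g = X iχ * (X iψ ^ 2 * w) := by linear_combination - h2
  exact (Xcancel iχ h3).symm ▸ rfl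

lemma decomp (f : Rg) : ∃ (b0 b1 b2 e : ℂ) (g1 g2 h2 : Rg),
    f = C b0 + X iψ * C b1 + X iχ * C b2 + X iψ * X iχ * C e
      + X iψ ^ 2 * g1 + X iχ ^ 2 * g2 + X iψ * X iχ ^ 2 * h2 := by
  induction f using MvPolynomial.induction_on with
  | C a => exact ⟨a, 0, 0, 0, 0, 0, 0, by simp⟩
  | add p q hp hq =>
    obtain ⟨b0, b1, b2, e, g1, g2, h2, hp⟩ := hp
    obtain ⟨b0', b1', b2', e', g1', g2', h2', hq⟩ := hq
    exact ⟨b0 + b0', b1 + b1', b2 + b2', e + e', g1 + g1', g2 + g2', h2 + h2', by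
      rw [map_add, map_add, map_add, map_add]; linear_combination hp + hq⟩
  | mul_X p j hp =>
    obtain ⟨b0, b1, b2, e, g1, g2, h2, hp⟩ := hp
    rcases j with i | i
    · have : i = 0 := Subsingleton.elim _ _
      subst this
      exact ⟨0, b0, 0, b2, C b1 + C e * X iχ + X iψ * g1 + X iχ ^ 2 * h2, 0, g2, by
        rw [map_zero]; linear_combination (X iψ) * hp⟩
    · have : i = 0 := Subsingleton.elim _ _
      subst this
      exact ⟨0, 0, b0, b1, X iχ * g1, C b2 + X iχ * g2 + X iψ * X iχ * h2, C e, by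
        rw [map_zero]; linear_combination (X iχ) * hp⟩

abbrev m10 : (Fin 1 ⊕ Fin 1) →₀ ℕ := Finsupp.single iψ 1
abbrev m01 : (Fin 1 ⊕ Fin 1) →₀ ℕ := Finsupp.single iχ 1
abbrev m11 : (Fin 1 ⊕ Fin 1) →₀ ℕ := m10 + m01

lemma coeff_X_mul_zero {i : Fin 1 ⊕ Fin 1} {m : (Fin 1 ⊕ Fin 1) →₀ ℕ} (h : m i = 0) (p : Rg) :
    coeff m (X i * p) = 0 := by
  classical rw [coeff_X_mul']
  simp [Finsupp.mem_support_iff, h]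

lemma k1 (p : Rg) : coeff m10 (X iψ * p) = coeff 0 p := by
  have := coeff_X_mul (0 : (Fin 1 ⊕ Fin 1) →₀ ℕ) iψ p
  simpa using this

lemma k2 (p : Rg) : coeff m01 (X iχ * p) = coeff 0 p := by
  have := coeff_X_mul (0 : (Fin 1 ⊕ Fin 1) →₀ ℕ) iχ p
  simpa using this

lemma k3 (p : Rg) : coeff m11 (X iψ * p) = coeff m01 p := by
  have := coeff_X_mul m01 iψ p
  simpa using this

lemma k4 (p : Rg) : coeff m11 (X iχ * p) = coeff m10 p := by
  have := coeff_X_mul m10 iχ p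
  rw [show Finsupp.single iχ 1 + m10 = m11 from add_comm _ _] at this
  exact this

lemma zψ0 (p : Rg) : coeff (0 : (Fin 1 ⊕ Fin 1) →₀ ℕ) (X iψ * p) = 0 :=
  coeff_X_mul_zero rfl p
lemma zχ0 (p : Rg) : coeff (0 : (Fin 1 ⊕ Fin 1) →₀ ℕ) (X iχ * p) = 0 :=
  coeff_X_mul_zero rfl p
lemma zψ01 (p : Rg) : coeff m01 (X iψ * p) = 0 :=
  coeff_X_mul_zero (by simp) p
lemma zχ10 (p : Rg) : coeff m10 (X iχ * p) = 0 :=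
  coeff_X_mul_zero (by simp) p

lemma zero_ne_m10 : ((0 : (Fin 1 ⊕ Fin 1) →₀ ℕ) = m10) = False := by
  apply eq_false; intro h
  exact one_ne_zero (Finsupp.single_eq_zero.mp h.symm)
lemma zero_ne_m01 : ((0 : (Fin 1 ⊕ Fin 1) →₀ ℕ) = m01) = False := by
  apply eq_false; intro h
  exact one_ne_zero (Finsupp.single_eq_zero.mp h.symm)
lemma cC10 (a : ℂ) : coeff m10 (C a : Rg) = 0 := by
  rw [coeff_C, if_neg]; rw [zero_ne_m10]; exact not_false
lemma cC01 (a : ℂ) : coeff m01 (C a : Rg) = 0 := by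
  rw [coeff_C, if_neg]; rw [zero_ne_m01]; exact not_false

lemma extractA {b0 b1 b2 : ℂ} {p q r : Rg}
    (h : C b0 + X iψ * C b1 + X iχ * C b2
        = X iψ ^ 2 * p + X iχ ^ 2 * q + X iψ * X iχ * r) :
    b0 = 0 ∧ b1 = 0 ∧ b2 = 0 := by
  refine ⟨?_, ?_, ?_⟩
  · have := congrArg (coeff (0 : (Fin 1 ⊕ Fin 1) →₀ ℕ)) h
    simpa [coeff_add, pow_two, mul_assoc, zψ0, zχ0] using this
  · have := congrArg (coeff m10) h
    simpa [coeff_add, pow_two, mul_assoc, k1, zψ0, zχ0, zψ01, zχ10, cC10, zero_ne_m10,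
      zero_ne_m01] using this
  · have := congrArg (coeff m01) h
    simpa [coeff_add, pow_two, mul_assoc, k2, zψ0, zχ0, zψ01, zχ10, cC01, zero_ne_m10,
      zero_ne_m01] using this

lemma extractB {b1 b2 e : ℂ} {p q : Rg}
    (h : X iψ * C b1 + X iχ * C b2 + X iψ * X iχ * C e
        = X iψ ^ 2 * p + X iχ ^ 2 * q) :
    b1 = 0 ∧ b2 = 0 ∧ e = 0 := by
  refine ⟨?_, ?_, ?_⟩
  · have := congrArg (coeff m10) h
    simpa [coeff_add, pow_two, mul_assoc, k1, zψ0, zχ0, zψ01, zχ10, cC10, zero_ne_m10,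
      zero_ne_m01] using this
  · have := congrArg (coeff m01) h
    simpa [coeff_add, pow_two, mul_assoc, k2, zψ0, zχ0, zψ01, zχ10, cC01, zero_ne_m10,
      zero_ne_m01] using this
  · have := congrArg (coeff m11) h
    simpa [coeff_add, pow_two, mul_assoc, k3, k4, k2, zψ0, zχ0, zψ01, zχ10, cC10, cC01,
      zero_ne_m10, zero_ne_m01] using this

lemma extractC {a b f : Rg}
    (h : X iψ ^ 2 * a + X iχ ^ 2 * b + X iψ * X iχ * f = 0) :
    coeff 0 f = 0 := by
  have := congrArg (coeff m11) h
  simpa [coeff_add, pow_two, mul_assoc, k3, k4, k2, zψ01, zχ10] using this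


set_option maxHeartbeats 2000000 in
/-- for `N = 1`, (i) `dω = 0` iff
`ω ∼ b₀₀ + ψ₁b₁₀ + χ₁b₀₁ + (c̃₃ψ₁ − c̃₁χ₁)a₁₀ + (c̃₃χ₁ − c̃₂ψ₁)a₀₁
     + (c̃₃ψ₁χ₁ − ½c̃₁χ₁² − ½c̃₂ψ₁²)a₁₁` with complex coefficients;
(ii) such a combination is `∼ 0` iff all six coefficients vanish. -/
theorem stmt6 :
    (∀ ω : Om3 1, d3 ω = 0 ↔
      ∃ b00 b10 b01 a10 a01 a11 : ℂ,
        Equiv3 ω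
          ![C b00 + ψ 0 * C b10 + χ 0 * C b01,
            -(χ 0 * C a10) - C (1/2 : ℂ) * χ 0 ^ 2 * C a11,
            -(ψ 0 * C a01) - C (1/2 : ℂ) * ψ 0 ^ 2 * C a11,
            ψ 0 * C a10 + χ 0 * C a01 + ψ 0 * χ 0 * C a11,
            0, 0, 0, 0])
    ∧
    (∀ b00 b10 b01 a10 a01 a11 : ℂ,
      Equiv3
        (![C b00 + ψ 0 * C b10 + χ 0 * C b01,
          -(χ 0 * C a10) - C (1/2 : ℂ) * χ 0 ^ 2 * C a11,
          -(ψ 0 * C a01) - C (1/2 : ℂ) * ψ 0 ^ 2 * C a11,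
          ψ 0 * C a10 + χ 0 * C a01 + ψ 0 * χ 0 * C a11,
          0, 0, 0, 0] : Om3 1) 0 ↔
      (b00 = 0 ∧ b10 = 0 ∧ b01 = 0 ∧ a10 = 0 ∧ a01 = 0 ∧ a11 = 0)) := by
  have hψX : (ψ 0 : Rg) = X iψ := rfl
  have hχX : (χ 0 : Rg) = X iχ := rfl
  constructor
  · intro ω
    constructor
    · -- hard direction
      intro hd
      have h0 : PP 1 * ω 1 + QQ 1 * ω 2 + SS 1 * ω 3 = 0 := congrFun hd 0
      have h1 : -(QQ 1 * ω 4) - SS 1 * ω 5 = 0 := congrFun hd 1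
      have h2 : PP 1 * ω 4 - SS 1 * ω 6 = 0 := congrFun hd 2
      have h6 : PP 1 * ω 7 = 0 := congrFun hd 6
      simp only [PP1, QQ1, SS1] at h0 h1 h2 h6
      -- ω 7 = 0
      have hω7 : ω 7 = 0 := by
        rcases mul_eq_zero.mp h6 with h | h
        · exact absurd h (pow_ne_zero 2 (X_ne_zero iψ))
        · exact h
      -- degree 2 sector
      have hA : X iχ * (X iχ * ω 4 + X iψ * ω 5) = 0 := by linear_combination -h1
      have hB : X iχ * ω 4 + X iψ * ω 5 = 0 :=
        (mul_eq_zero.mp hA).resolve_left (X_ne_zero iχ)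
      obtain ⟨t, ht⟩ := dvd_of_other_mul (show iχ ≠ iψ by simp)
        (show X iχ * ω 4 = X iψ * (-(ω 5)) by linear_combination hB)
      have hω5 : ω 5 = -(X iχ * t) := by
        have : X iψ * ω 5 = X iψ * (-(X iχ * t)) := by linear_combination hB - X iχ * ht
        exact Xcancel iψ this
      obtain ⟨u, htu⟩ := dvd_of_other_sq_mul (show iψ ≠ iχ by simp)
        (show X iψ ^ 2 * t = X iχ * ω 6 by
          have : X iψ * (X iψ ^ 2 * t) = X iψ * (X iχ * ω 6) := by
            linear_combination h2 - X iψ ^ 2 * ht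
          exact Xcancel iψ this)
      have hω6 : ω 6 = X iψ ^ 2 * u := by
        have : X iχ * ω 6 = X iχ * (X iψ ^ 2 * u) := by
          have h' : X iψ * (X iψ ^ 2 * t) = X iψ * (X iχ * ω 6) := by
            linear_combination h2 - X iψ ^ 2 * ht
          have h'' := Xcancel iψ h'
          linear_combination -h'' + X iψ ^ 2 * htu
        exact Xcancel iχ this
      -- degree 1 sector
      obtain ⟨c0, c1, c2, e, g1, g2, hh2, hω3⟩ := decomp (ω 3)
      have hc0 : c0 = 0 := by
        have hext := extractC (a := ω 1) (b := ω 2) (f := ω 3) (by linear_combination h0)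
        have : coeff 0 (ω 3) = c0 := by
          rw [hω3]
          simp [coeff_add, pow_two, mul_assoc, zψ0, zχ0]
        rw [this] at hext; exact hext
      have hCc0 : (C c0 : Rg) = 0 := by rw [hc0, map_zero]
      have key : X iψ ^ 2 * (ω 1 + X iχ * C c1 + X iψ * X iχ * g1)
          + X iχ ^ 2 * (ω 2 + X iψ * C c2 + X iψ * X iχ * (g2 + X iψ * hh2))
          + X iψ ^ 2 * X iχ ^ 2 * C e = 0 := by
        linear_combination h0 - (X iψ * X iχ) * hω3 - (X iψ * X iχ) * hCc0
      obtain ⟨w, hw1, hw2⟩ := sq_dvd_sq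
        (show X iψ ^ 2 * (ω 1 + X iχ * C c1 + X iψ * X iχ * g1)
            = X iχ ^ 2 * (-(ω 2 + X iψ * C c2 + X iψ * X iχ * (g2 + X iψ * hh2))
              - X iψ ^ 2 * C e) by linear_combination key)
      -- degree 0 sector
      obtain ⟨b00, b10, b01, e0, t1, t2, t3, hω0⟩ := decomp (ω 0)
      refine ⟨b00, b10, b01, c1, c2, e, ⟨![0, t1, t2, C e0 + X iχ * t3,
        -w - C (1/2 : ℂ) * C e, g1, g2 + X iψ * hh2, u], ?_⟩⟩
      funext i
      fin_cases i
      · show ω 0 - (C b00 + ψ 0 * C b10 + χ 0 * C b01)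
          = PP 1 * t1 + QQ 1 * t2 + SS 1 * (C e0 + X iχ * t3)
        rw [hψX, hχX, PP1, QQ1, SS1]
        linear_combination hω0
      · show ω 1 - (-(χ 0 * C c1) - C (1/2 : ℂ) * χ 0 ^ 2 * C e)
          = -(QQ 1 * (-w - C (1/2 : ℂ) * C e)) - SS 1 * g1
        rw [hχX, QQ1, SS1]
        linear_combination hw1
      · show ω 2 - (-(ψ 0 * C c2) - C (1/2 : ℂ) * ψ 0 ^ 2 * C e)
          = PP 1 * (-w - C (1/2 : ℂ) * C e) - SS 1 * (g2 + X iψ * hh2)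
        rw [hψX, PP1, SS1]
        linear_combination -hw2 + (X iψ ^ 2 * C e) * hC2
      · show ω 3 - (ψ 0 * C c1 + χ 0 * C c2 + ψ 0 * χ 0 * C e)
          = PP 1 * g1 + QQ 1 * (g2 + X iψ * hh2)
        rw [hψX, hχX, PP1, QQ1]
        linear_combination hω3 + hCc0
      · show ω 4 - 0 = SS 1 * u
        rw [SS1]
        linear_combination ht + X iψ * htu
      · show ω 5 - 0 = -(QQ 1 * u)
        rw [QQ1]
        linear_combination hω5 - X iχ * htu
      · show ω 6 - 0 = PP 1 * u
        rw [PP1]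
        linear_combination hω6
      · show ω 7 - 0 = 0
        rw [hω7, sub_zero]
    · -- easy direction
      rintro ⟨b00, b10, b01, a10, a01, a11, ρ, hρ⟩
      have e0 : ω 0 - (C b00 + ψ 0 * C b10 + χ 0 * C b01)
          = PP 1 * ρ 1 + QQ 1 * ρ 2 + SS 1 * ρ 3 := congrFun hρ 0
      have e1 : ω 1 - (-(χ 0 * C a10) - C (1/2 : ℂ) * χ 0 ^ 2 * C a11)
          = -(QQ 1 * ρ 4) - SS 1 * ρ 5 := congrFun hρ 1
      have e2 : ω 2 - (-(ψ 0 * C a01) - C (1/2 : ℂ) * ψ 0 ^ 2 * C a11)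
          = PP 1 * ρ 4 - SS 1 * ρ 6 := congrFun hρ 2
      have e3 : ω 3 - (ψ 0 * C a10 + χ 0 * C a01 + ψ 0 * χ 0 * C a11)
          = PP 1 * ρ 5 + QQ 1 * ρ 6 := congrFun hρ 3
      have e4 : ω 4 - 0 = SS 1 * ρ 7 := congrFun hρ 4
      have e5 : ω 5 - 0 = -(QQ 1 * ρ 7) := congrFun hρ 5
      have e6 : ω 6 - 0 = PP 1 * ρ 7 := congrFun hρ 6
      have e7 : ω 7 - 0 = (0 : Rg) := congrFun hρ 7
      rw [sub_zero] at e7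
      simp only [hψX, hχX, PP1, QQ1, SS1] at e0 e1 e2 e3 e4 e5 e6
      funext i
      fin_cases i
      · show PP 1 * ω 1 + QQ 1 * ω 2 + SS 1 * ω 3 = 0
        rw [PP1, QQ1, SS1]
        linear_combination (X iψ ^ 2) * e1 + (X iχ ^ 2) * e2 + (X iψ * X iχ) * e3
          - (X iψ ^ 2 * X iχ ^ 2 * C a11) * hC2
      · show -(QQ 1 * ω 4) - SS 1 * ω 5 = 0
        rw [QQ1, SS1]
        linear_combination -(X iχ ^ 2) * e4 - (X iψ * X iχ) * e5
      · show PP 1 * ω 4 - SS 1 * ω 6 = 0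
        rw [PP1, SS1]
        linear_combination (X iψ ^ 2) * e4 - (X iψ * X iχ) * e6
      · show PP 1 * ω 5 + QQ 1 * ω 6 = 0
        rw [PP1, QQ1]
        linear_combination (X iψ ^ 2) * e5 + (X iχ ^ 2) * e6
      · show SS 1 * ω 7 = 0
        rw [e7, mul_zero]
      · show -(QQ 1 * ω 7) = 0
        rw [e7, mul_zero, neg_zero]
      · show PP 1 * ω 7 = 0
        rw [e7, mul_zero]
      · show (0 : Rg) = 0
        rfl
  · -- part (ii)
    intro b00 b10 b01 a10 a01 a11
    constructor
    · rintro ⟨ρ, hρ⟩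
      have e0 : (C b00 + ψ 0 * C b10 + χ 0 * C b01) - 0
          = PP 1 * ρ 1 + QQ 1 * ρ 2 + SS 1 * ρ 3 := congrFun hρ 0
      have e3 : (ψ 0 * C a10 + χ 0 * C a01 + ψ 0 * χ 0 * C a11) - 0
          = PP 1 * ρ 5 + QQ 1 * ρ 6 := congrFun hρ 3
      simp only [hψX, hχX, PP1, QQ1, SS1] at e0 e3
      obtain ⟨hb0, hb1, hb2⟩ := extractA (b0 := b00) (b1 := b10) (b2 := b01) (p := ρ 1) (q := ρ 2) (r := ρ 3)
        (by linear_combination e0)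
      obtain ⟨ha1, ha2, ha3⟩ := extractB (b1 := a10) (b2 := a01) (e := a11) (p := ρ 5) (q := ρ 6)
        (by linear_combination e3)
      exact ⟨hb0, hb1, hb2, ha1, ha2, ha3⟩
    · rintro ⟨rfl, rfl, rfl, rfl, rfl, rfl⟩
      refine ⟨0, ?_⟩
      funext i
      fin_cases i
      · show (C (0:ℂ) + ψ 0 * C (0:ℂ) + χ 0 * C (0:ℂ)) - 0
          = PP 1 * (0 : Rg) + QQ 1 * (0 : Rg) + SS 1 * (0 : Rg)
        simp only [map_zero]; ring
      · show (-(χ 0 * C (0:ℂ)) - C (1/2 : ℂ) * χ 0 ^ 2 * C (0:ℂ)) - 0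
          = -(QQ 1 * (0 : Rg)) - SS 1 * (0 : Rg)
        simp only [map_zero]; ring
      · show (-(ψ 0 * C (0:ℂ)) - C (1/2 : ℂ) * ψ 0 ^ 2 * C (0:ℂ)) - 0
          = PP 1 * (0 : Rg) - SS 1 * (0 : Rg)
        simp only [map_zero]; ring
      · show (ψ 0 * C (0:ℂ) + χ 0 * C (0:ℂ) + ψ 0 * χ 0 * C (0:ℂ)) - 0
          = PP 1 * (0 : Rg) + QQ 1 * (0 : Rg)
        simp only [map_zero]; ring
      · show (0 : Rg) - 0 = SS 1 * (0 : Rg)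
        simp only [mul_zero, sub_zero]
      · show (0 : Rg) - 0 = -(QQ 1 * (0 : Rg))
        simp only [mul_zero, sub_zero, neg_zero]
      · show (0 : Rg) - 0 = PP 1 * (0 : Rg)
        simp only [mul_zero, sub_zero]
      · show (0 : Rg) - 0 = (0 : Rg)
        simp only [sub_zero]
end
end

section
/- Assume N = 2. Then (i) an element ω ∈ Ω satisfies dω = 0 if and only if ω ∼ b₀₀ + ψ₁b₁₀ + χ₁b₀₁ + (c̃₃(ψ₁χ₂ + χ₁ψ₂) − c̃₁χ₁χ₂ − c̃₂ψ₁ψ₂)b + (c̃₃(ψ₁χ₁ − ψ₂χ₂) − ½c̃₁(χ₁² − χ₂²) − ½c̃₂(ψ₁² − ψ₂²))a₁₁ for some polynomials b₀₀, b₁₀, b₀₁, b, a₁₁ ∈ ℂ[ψ₂, χ₂]; and (ii) such a combination is ∼ 0 if and only if b₀₀ = b = a₁₁ = 0 and ψ₁b₁₀ + χ₁b₀₁ = (ψ₁χ₂ − χ₁ψ₂)(ψ₂d₁₀ − χ₂d₀₁) for some polynomials d₁₀, d₀₁ ∈ ℂ[ψ₂, χ₂]. -/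
/-!
D = 3 supersymmetry algebra cohomology.
`R3 N = ℂ[ψ₁,…,ψ_N, χ₁,…,χ_N]`, `Om3 N` is the free module with basis
`{1, c̃₁, c̃₂, c̃₃, c̃₁c̃₂, c̃₁c̃₃, c̃₂c̃₃, c̃₁c̃₂c̃₃}` (components 0,…,7), and
`d3` is the odd superderivation with `dc̃₁ = P`, `dc̃₂ = Q`, `dc̃₃ = S`, `d|_R = 0`.
-/

open MvPolynomial

noncomputable section

/-- The subring `ℂ[ψ₂, χ₂]` of `R3 2`. -/
def coefRing2 : Subalgebra ℂ (R3 2) :=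
  MvPolynomial.supported ℂ ({Sum.inl 1, Sum.inr 1} : Set (Fin 2 ⊕ Fin 2))

/-!
Let `A = ℂ[ψ 1, χ 1]`. Modulo `(PP 2, QQ 2)` the ring is free over `A` on `1, ψ 0, χ 0, ψ 0 χ 0`:
`ψ 0 ^ 2` and `χ 0 ^ 2` reduce into `A`, and uniqueness comes from the substitutions
`ψ 0 ↦ ±i ψ 1`, `χ 0 ↦ ±i χ 1`, which fix `A` and kill `PP 2`, `QQ 2` (and `SS 2` when the signs
agree). The factorization `PP 2 = (ψ 0 + i ψ 1)(ψ 0 - i ψ 1)` makes `PP 2` coprime to `QQ 2` and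
`SS 2`, so the Koszul relations among them are trivial. A cocycle is then straightened from the
top: its `c̃₁c̃₂c̃₃`-part vanishes, its degree-two part is exact, the normal form of
`SS 2 * ω 3 ∈ (PP 2, QQ 2)` pins `ω 3` down to the `b`, `a₁₁` terms, and `ω 0` is put in normal
form. For exactness of a representative, uniqueness of normal forms kills `b` and `a₁₁`, the
substitutions kill `b₀₀` and leave `ψ 0 b₁₀ + χ 0 b₀₁ = T k` with `T = ψ 0 χ 1 - χ 0 ψ 1`, and `k`
has no constant term because the coefficient of `ψ 0 χ 1` separates `T` from `(PP 2, QQ 2, SS 2)`.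
-/

open Complex

theorem eq_zero_of_forall_add_smul_eq_zero {V : Type*} [AddCommGroup V] [Module ℂ V] {x y : V}
    (h : ∀ s : ℂ, s * s = -1 → x + s • y = 0) : x = 0 ∧ y = 0 := by
  have h₁ := h I I_mul_I
  have h₂ := h (-I) (by rw [neg_mul_neg, I_mul_I])
  have hy : (2 : ℂ) • y = 0 := by
    linear_combination (norm := module) (-I) • (h₁ - h₂) + (2 : ℂ) • I_mul_I • y
  have hy : y = 0 := (smul_eq_zero.mp hy).resolve_left two_ne_zero
  exact ⟨by simpa [hy] using h₁, hy⟩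

theorem IsRelPrime.exists_eq_mul_of_mul_eq {α : Type*} [CommMonoidWithZero α]
    [IsCancelMulZero α] [DecompositionMonoid α] {a b x y : α} (hab : IsRelPrime a b) (ha : a ≠ 0)
    (h : a * x = b * y) : ∃ t, x = b * t ∧ y = a * t := by
  obtain ⟨t, rfl⟩ := hab.dvd_of_dvd_mul_left ⟨x, h.symm⟩
  refine ⟨t, mul_left_cancel₀ ha ?_, rfl⟩
  rw [h, mul_left_comm]

theorem MvPolynomial.irreducible_X_add_C_mul_X {σ R : Type*} [CommRing R] [IsDomain R]
    {i j : σ} (hij : i ≠ j) (c : R) : Irreducible (X i + C c * X j : MvPolynomial σ R) := by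
  classical
  have hj : i ∉ (C c * X j : MvPolynomial σ R).vars := fun hi ↦
    hij (by simpa [vars_C] using vars_mul _ _ hi)
  simpa using irreducible_mul_X_add 1 _ i one_ne_zero (by simp) hj isRelPrime_one_left

theorem d3_sub {N : ℕ} (ω ω' : Om3 N) : d3 (ω - ω') = d3 ω - d3 ω' := by
  funext i; fin_cases i <;> simp [d3] <;> ring

theorem d3_d3 {N : ℕ} (ρ : Om3 N) : d3 (d3 ρ) = 0 := by
  funext i; fin_cases i <;> simp [d3] <;> ring

theorem Equiv3.d3_eq {N : ℕ} {ω ω' : Om3 N} (h : Equiv3 ω ω') : d3 ω = d3 ω' := by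
  obtain ⟨ρ, hρ⟩ := h
  rw [← sub_eq_zero, ← d3_sub, hρ, d3_d3]

namespace SusyCohomology

theorem PP_two : PP 2 = ψ 0 ^ 2 + ψ 1 ^ 2 := by simp [PP, Fin.sum_univ_two]
theorem QQ_two : QQ 2 = χ 0 ^ 2 + χ 1 ^ 2 := by simp [QQ, Fin.sum_univ_two]
theorem SS_two : SS 2 = ψ 0 * χ 0 + ψ 1 * χ 1 := by simp [SS, Fin.sum_univ_two]

theorem C_half_mul_two : (C (1 / 2 : ℂ) : R3 2) * 2 = 1 := by
  rw [← map_ofNat C 2, ← map_mul]; norm_num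

def cocycleRep (b00 b10 b01 b a11 : R3 2) : Om3 2 :=
  ![b00 + ψ 0 * b10 + χ 0 * b01,
    -(χ 0 * χ 1 * b) - C (1/2 : ℂ) * (χ 0 ^ 2 - χ 1 ^ 2) * a11,
    -(ψ 0 * ψ 1 * b) - C (1/2 : ℂ) * (ψ 0 ^ 2 - ψ 1 ^ 2) * a11,
    (ψ 0 * χ 1 + χ 0 * ψ 1) * b + (ψ 0 * χ 0 - ψ 1 * χ 1) * a11,
    0, 0, 0, 0]

theorem d3_cocycleRep (b00 b10 b01 b a11 : R3 2) : d3 (cocycleRep b00 b10 b01 b a11) = 0 := by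
  funext i
  fin_cases i <;> simp [d3, cocycleRep, -one_div]
  rw [PP_two, QQ_two, SS_two]
  linear_combination (-(ψ 0 ^ 2 * χ 0 ^ 2) + ψ 1 ^ 2 * χ 1 ^ 2) * a11 * C_half_mul_two

theorem psi_one_mem : ψ 1 ∈ coefRing2 :=
  Algebra.subset_adjoin ⟨Sum.inl 1, by simp, rfl⟩

theorem chi_one_mem : χ 1 ∈ coefRing2 :=
  Algebra.subset_adjoin ⟨Sum.inr 1, by simp, rfl⟩

theorem C_mem (c : ℂ) : C c ∈ coefRing2 := coefRing2.algebraMap_mem c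

def collapse (s t : ℂ) : R3 2 →ₐ[ℂ] R3 2 :=
  aeval (Sum.elim ![C s * ψ 1, ψ 1] ![C t * χ 1, χ 1])

@[simp] theorem collapse_psi_zero (s t : ℂ) : collapse s t (ψ 0) = C s * ψ 1 := by
  simp [collapse, ψ]
@[simp] theorem collapse_psi_one (s t : ℂ) : collapse s t (ψ 1) = ψ 1 := by
  simp [collapse, ψ]
@[simp] theorem collapse_chi_zero (s t : ℂ) : collapse s t (χ 0) = C t * χ 1 := by
  simp [collapse, χ]
@[simp] theorem collapse_chi_one (s t : ℂ) : collapse s t (χ 1) = χ 1 := by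
  simp [collapse, χ]

theorem collapse_mem (s t : ℂ) (f : R3 2) : collapse s t f ∈ coefRing2 := by
  suffices (collapse s t).range ≤ coefRing2 from this ⟨f, rfl⟩
  rw [collapse, ← Algebra.adjoin_range_eq_range_aeval, Algebra.adjoin_le_iff]
  rintro _ ⟨(i | i), rfl⟩ <;> fin_cases i
  · exact mul_mem (C_mem s) psi_one_mem
  · exact psi_one_mem
  · exact mul_mem (C_mem t) chi_one_mem
  · exact chi_one_mem

theorem collapse_of_mem (s t : ℂ) {f : R3 2} (hf : f ∈ coefRing2) : collapse s t f = f := by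
  induction hf using Algebra.adjoin_induction with
  | mem x hx =>
    obtain ⟨j, hj | hj, rfl⟩ := hx <;> subst hj
    · exact collapse_psi_one s t
    · exact collapse_chi_one s t
  | algebraMap r => exact AlgHom.commutes _ r
  | add x y _ _ hx hy => rw [map_add, hx, hy]
  | mul x y _ _ hx hy => rw [map_mul, hx, hy]

theorem collapse_PP {s : ℂ} (hs : s * s = -1) (t : ℂ) : collapse s t (PP 2) = 0 := by
  have : (C s : R3 2) * C s = -1 := by rw [← map_mul, hs, map_neg, map_one]
  simp only [PP_two, map_add, map_pow, collapse_psi_zero, collapse_psi_one]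
  linear_combination ψ 1 ^ 2 * this

theorem collapse_QQ (s : ℂ) {t : ℂ} (ht : t * t = -1) : collapse s t (QQ 2) = 0 := by
  have : (C t : R3 2) * C t = -1 := by rw [← map_mul, ht, map_neg, map_one]
  simp only [QQ_two, map_add, map_pow, collapse_chi_zero, collapse_chi_one]
  linear_combination χ 1 ^ 2 * this

theorem collapse_SS {s t : ℂ} (hst : s * t = -1) : collapse s t (SS 2) = 0 := by
  have : (C s : R3 2) * C t = -1 := by rw [← map_mul, hst, map_neg, map_one]
  simp only [SS_two, map_add, map_mul, collapse_psi_zero, collapse_psi_one,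
    collapse_chi_zero, collapse_chi_one]
  linear_combination ψ 1 * χ 1 * this

theorem mem_of_psi_one_mul_mem {k : R3 2} (hk : ψ 1 * k ∈ coefRing2) : k ∈ coefRing2 := by
  have h := collapse_of_mem 0 0 hk
  rw [map_mul, collapse_psi_one] at h
  exact mul_left_cancel₀ (X_ne_zero _) h ▸ collapse_mem 0 0 k

theorem exists_normalForm (f : R3 2) : ∃ b00 b10 b01 b11 α β : R3 2,
    b00 ∈ coefRing2 ∧ b10 ∈ coefRing2 ∧ b01 ∈ coefRing2 ∧ b11 ∈ coefRing2 ∧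
    f = b00 + ψ 0 * b10 + χ 0 * b01 + ψ 0 * χ 0 * b11 + PP 2 * α + QQ 2 * β := by
  induction f using MvPolynomial.induction_on with
  | C a => exact ⟨C a, 0, 0, 0, 0, 0, C_mem a, zero_mem _, zero_mem _, zero_mem _, by ring⟩
  | add p q hp hq =>
    obtain ⟨b00, b10, b01, b11, α, β, m00, m10, m01, m11, rfl⟩ := hp
    obtain ⟨c00, c10, c01, c11, α', β', n00, n10, n01, n11, rfl⟩ := hq
    exact ⟨b00 + c00, b10 + c10, b01 + c01, b11 + c11, α + α', β + β',
      add_mem m00 n00, add_mem m10 n10, add_mem m01 n01, add_mem m11 n11, by ring⟩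
  | mul_X p j hp =>
    obtain ⟨b00, b10, b01, b11, α, β, m00, m10, m01, m11, rfl⟩ := hp
    -- reduce with `ψ 0 ^ 2 = PP 2 - ψ 1 ^ 2` and `χ 0 ^ 2 = QQ 2 - χ 1 ^ 2`
    rcases j with i | i <;> fin_cases i
    · refine ⟨-(ψ 1 ^ 2 * b10), b00, -(ψ 1 ^ 2 * b11), b01,
        b10 + χ 0 * b11 + ψ 0 * α, ψ 0 * β,
        neg_mem (mul_mem (pow_mem psi_one_mem 2) m10), m00,
        neg_mem (mul_mem (pow_mem psi_one_mem 2) m11), m01, ?_⟩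
      change _ * ψ 0 = _
      rw [PP_two, QQ_two]; ring
    · exact ⟨ψ 1 * b00, ψ 1 * b10, ψ 1 * b01, ψ 1 * b11, ψ 1 * α, ψ 1 * β,
        mul_mem psi_one_mem m00, mul_mem psi_one_mem m10, mul_mem psi_one_mem m01,
        mul_mem psi_one_mem m11, by change _ * ψ 1 = _; ring⟩
    · refine ⟨-(χ 1 ^ 2 * b01), -(χ 1 ^ 2 * b11), b00, b10,
        χ 0 * α, b01 + ψ 0 * b11 + χ 0 * β,
        neg_mem (mul_mem (pow_mem chi_one_mem 2) m01),
        neg_mem (mul_mem (pow_mem chi_one_mem 2) m11), m00, m10, ?_⟩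
      change _ * χ 0 = _
      rw [PP_two, QQ_two]; ring
    · exact ⟨χ 1 * b00, χ 1 * b10, χ 1 * b01, χ 1 * b11, χ 1 * α, χ 1 * β,
        mul_mem chi_one_mem m00, mul_mem chi_one_mem m10, mul_mem chi_one_mem m01,
        mul_mem chi_one_mem m11, by change _ * χ 1 = _; ring⟩

theorem normalForm_eq_zero {b00 b10 b01 b11 α β : R3 2}
    (m00 : b00 ∈ coefRing2) (m10 : b10 ∈ coefRing2) (m01 : b01 ∈ coefRing2)
    (m11 : b11 ∈ coefRing2)
    (h : b00 + ψ 0 * b10 + χ 0 * b01 + ψ 0 * χ 0 * b11 = PP 2 * α + QQ 2 * β) :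
    b00 = 0 ∧ b10 = 0 ∧ b01 = 0 ∧ b11 = 0 := by
  have collapsed : ∀ s t : ℂ, s * s = -1 → t * t = -1 →
      b00 + t • (χ 1 * b01) + s • (ψ 1 * b10 + t • (ψ 1 * (χ 1 * b11))) = 0 := by
    intro s t hs ht
    have h' := congrArg (collapse s t) h
    simp only [map_add, map_mul, collapse_PP hs, collapse_QQ s ht, collapse_of_mem s t m00,
      collapse_of_mem s t m10, collapse_of_mem s t m01, collapse_of_mem s t m11,
      collapse_psi_zero, collapse_chi_zero, zero_mul, add_zero] at h'
    simp only [← C_mul']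
    linear_combination h'
  have hsplit t (ht : t * t = -1) := eq_zero_of_forall_add_smul_eq_zero (collapsed · t · ht)
  obtain ⟨h00, h01⟩ := eq_zero_of_forall_add_smul_eq_zero fun t ht ↦ (hsplit t ht).1
  obtain ⟨h10, h11⟩ := eq_zero_of_forall_add_smul_eq_zero fun t ht ↦ (hsplit t ht).2
  simp only [mul_eq_zero, ψ, χ, X_ne_zero, false_or] at h01 h10 h11
  exact ⟨h00, h10, h01, h11⟩

theorem PP_two_eq_mul : PP 2 = (ψ 0 + C I * ψ 1) * (ψ 0 + C (-I) * ψ 1) := by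
  have : (C I : R3 2) * C I = -1 := by rw [← map_mul, I_mul_I, map_neg, map_one]
  rw [PP_two, map_neg]
  linear_combination ψ 1 ^ 2 * this

theorem not_dvd_of_eval_eq_zero {f g : R3 2} (x : Fin 2 ⊕ Fin 2 → ℂ) (hf : eval x f = 0)
    (hg : eval x g ≠ 0) : ¬ f ∣ g :=
  fun h ↦ hg (zero_dvd_iff.mp (hf ▸ map_dvd (eval x) h))

-- `ψ 0 + C s * ψ 1` vanishes at `ψ 0 = -s`, `ψ 1 = 1`.
theorem isRelPrime_PP_two {f : R3 2}
    (hf : ∀ s : ℂ, s * s = -1 → eval (Sum.elim ![-s, 1] ![1, 0]) f ≠ 0) :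
    IsRelPrime (PP 2) f := by
  have key : ∀ s : ℂ, s * s = -1 → IsRelPrime (ψ 0 + C s * ψ 1) f := fun s hs ↦
    (irreducible_X_add_C_mul_X (by simp) s).isRelPrime_iff_not_dvd.mpr <|
      not_dvd_of_eval_eq_zero _ (by simp) (hf s hs)
  rw [PP_two_eq_mul]
  exact (key I I_mul_I).mul_left (key (-I) (by rw [neg_mul_neg, I_mul_I]))

theorem isRelPrime_PP_QQ : IsRelPrime (PP 2) (QQ 2) :=
  isRelPrime_PP_two fun s _ ↦ by simp [QQ_two, χ]

theorem isRelPrime_PP_SS : IsRelPrime (PP 2) (SS 2) :=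
  isRelPrime_PP_two fun s hs ↦ by
    have : s ≠ 0 := by rintro rfl; norm_num at hs
    simpa [SS_two, ψ, χ] using this

theorem PP_ne_zero : PP 2 ≠ 0 := by
  rw [PP_two_eq_mul]
  exact mul_ne_zero (irreducible_X_add_C_mul_X (by simp) _).ne_zero
    (irreducible_X_add_C_mul_X (by simp) _).ne_zero

theorem exists_mem_of_psi_one_mul_eq {b c : R3 2} (hc : c ∈ coefRing2)
    (h : ψ 1 * b = χ 1 * c) : ∃ k ∈ coefRing2, b = χ 1 * k ∧ c = ψ 1 * k := by
  have hrel : IsRelPrime (ψ 1 : R3 2) (χ 1) :=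
    (X_prime (i := Sum.inl 1)).irreducible.isRelPrime_iff_not_dvd.mpr <|
      not_dvd_of_eval_eq_zero (Sum.elim 0 1) (by simp) (by simp [χ])
  obtain ⟨k, rfl, rfl⟩ := hrel.exists_eq_mul_of_mul_eq (X_ne_zero _) h
  exact ⟨k, mem_of_psi_one_mul_mem hc, rfl, rfl⟩

def psiChiMinor : R3 2 := ψ 0 * χ 1 - χ 0 * ψ 1

theorem coeff_psiChiMinor :
    coeff (Finsupp.single (Sum.inl 0) 1 + Finsupp.single (Sum.inr 1) 1) psiChiMinor = 1 := by
  simp [psiChiMinor, ψ, χ, X, monomial_mul, coeff_monomial, Finsupp.ext_iff]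

-- No monomial of `PP 2`, `QQ 2`, `SS 2` divides `ψ 0 * χ 1`.
theorem coeff_PP_QQ_SS (ρ₁ ρ₂ ρ₃ : R3 2) :
    coeff (Finsupp.single (Sum.inl 0) 1 + Finsupp.single (Sum.inr 1) 1)
      (PP 2 * ρ₁ + QQ 2 * ρ₂ + SS 2 * ρ₃) = 0 := by
  simp only [PP_two, QQ_two, SS_two, ψ, χ, pow_two, add_mul, mul_assoc, coeff_add, coeff_X_mul']
  simp

theorem exists_eq_C_add_of_mem {k : R3 2} (hk : k ∈ coefRing2) :
    ∃ c : ℂ, ∃ k₁ ∈ coefRing2, ∃ k₂ ∈ coefRing2, k = C c + ψ 1 * k₁ + χ 1 * k₂ := by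
  induction hk using Algebra.adjoin_induction with
  | mem x hx =>
    obtain ⟨j, hj | hj, rfl⟩ := hx <;> subst hj
    · exact ⟨0, 1, one_mem _, 0, zero_mem _, by simp [ψ]⟩
    · exact ⟨0, 0, zero_mem _, 1, one_mem _, by simp [χ]⟩
  | algebraMap r => exact ⟨r, 0, zero_mem _, 0, zero_mem _, by simp [algebraMap_eq]⟩
  | add x y _ _ hx hy =>
    obtain ⟨c, k₁, m₁, k₂, m₂, rfl⟩ := hx
    obtain ⟨c', k₁', m₁', k₂', m₂', rfl⟩ := hy
    exact ⟨c + c', k₁ + k₁', add_mem m₁ m₁', k₂ + k₂', add_mem m₂ m₂', by rw [map_add]; ring⟩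
  | mul x y _ hy hx hy' =>
    obtain ⟨c, k₁, m₁, k₂, m₂, rfl⟩ := hx
    obtain ⟨c', k₁', m₁', k₂', m₂', rfl⟩ := hy'
    exact ⟨c * c', C c * k₁' + k₁ * _, add_mem (mul_mem (C_mem c) m₁') (mul_mem m₁ hy),
      C c * k₂' + k₂ * _, add_mem (mul_mem (C_mem c) m₂') (mul_mem m₂ hy), by rw [map_mul]; ring⟩

theorem exists_of_psiChiMinor_mul_eq {k ρ₁ ρ₂ ρ₃ : R3 2} (hk : k ∈ coefRing2)
    (h : psiChiMinor * k = PP 2 * ρ₁ + QQ 2 * ρ₂ + SS 2 * ρ₃) :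
    ∃ d10 ∈ coefRing2, ∃ d01 ∈ coefRing2, k = ψ 1 * d10 - χ 1 * d01 := by
  obtain ⟨c, k₁, m₁, k₂, m₂, rfl⟩ := exists_eq_C_add_of_mem hk
  -- `psiChiMinor * ψ 1 = ψ 0 * SS 2 - χ 0 * PP 2` and `psiChiMinor * χ 1 = ψ 0 * QQ 2 - χ 0 * SS 2`
  have hc : C c * psiChiMinor = PP 2 * (ρ₁ + χ 0 * k₁) + QQ 2 * (ρ₂ - ψ 0 * k₂)
      + SS 2 * (ρ₃ - ψ 0 * k₁ + χ 0 * k₂) := by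
    rw [psiChiMinor, PP_two, QQ_two, SS_two] at h ⊢
    linear_combination h
  have := congrArg (coeff (Finsupp.single (Sum.inl 0) 1 + Finsupp.single (Sum.inr 1) 1)) hc
  rw [coeff_C_mul, coeff_psiChiMinor, coeff_PP_QQ_SS, mul_one] at this
  exact ⟨k₁, m₁, -k₂, neg_mem m₂, by rw [this, map_zero]; ring⟩

theorem exists_of_PP_mul_sub_SS_mul_eq_zero {ω₄ ω₅ ω₆ : R3 2}
    (h₂ : PP 2 * ω₄ - SS 2 * ω₆ = 0) (h₃ : PP 2 * ω₅ + QQ 2 * ω₆ = 0) :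
    ∃ t, ω₄ = SS 2 * t ∧ ω₅ = -(QQ 2 * t) ∧ ω₆ = PP 2 * t := by
  obtain ⟨t, rfl, rfl⟩ :=
    isRelPrime_PP_SS.exists_eq_mul_of_mul_eq PP_ne_zero (sub_eq_zero.mp h₂)
  exact ⟨t, rfl, mul_left_cancel₀ PP_ne_zero (by linear_combination h₃), rfl⟩

theorem exists_of_SS_mul_eq {ω₃ x y : R3 2} (h : SS 2 * ω₃ = PP 2 * x + QQ 2 * y) :
    ∃ b ∈ coefRing2, ∃ a11 ∈ coefRing2, ∃ ρ₅ ρ₆ : R3 2,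
      ω₃ = (ψ 0 * χ 1 + χ 0 * ψ 1) * b + (ψ 0 * χ 0 - ψ 1 * χ 1) * a11
        + (PP 2 * ρ₅ + QQ 2 * ρ₆) := by
  obtain ⟨a, b', c', e, α, β, ma, mb, mc, me, rfl⟩ := exists_normalForm ω₃
  -- the normal form of `SS 2 * ω₃` modulo `PP 2` and `QQ 2`
  have hnf : (ψ 1 * χ 1 * a + ψ 1 ^ 2 * χ 1 ^ 2 * e) + ψ 0 * (ψ 1 * χ 1 * b' - χ 1 ^ 2 * c')
      + χ 0 * (ψ 1 * χ 1 * c' - ψ 1 ^ 2 * b') + ψ 0 * χ 0 * (a + ψ 1 * χ 1 * e)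
      = PP 2 * (x - SS 2 * α - χ 0 * b' - χ 0 ^ 2 * e)
        + QQ 2 * (y - SS 2 * β - ψ 0 * c' + ψ 1 ^ 2 * e) := by
    rw [PP_two, QQ_two, SS_two] at h ⊢
    linear_combination h
  have mψχ := mul_mem psi_one_mem chi_one_mem
  obtain ⟨-, h10, -, h11⟩ := normalForm_eq_zero
    (add_mem (mul_mem mψχ ma)
      (mul_mem (mul_mem (pow_mem psi_one_mem 2) (pow_mem chi_one_mem 2)) me))
    (sub_mem (mul_mem mψχ mb) (mul_mem (pow_mem chi_one_mem 2) mc))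
    (sub_mem (mul_mem mψχ mc) (mul_mem (pow_mem psi_one_mem 2) mb))
    (add_mem ma (mul_mem mψχ me)) hnf
  have hsym : ψ 1 * b' = χ 1 * c' := by
    have : χ 1 * (ψ 1 * b' - χ 1 * c') = 0 := by linear_combination h10
    simpa [χ, X_ne_zero, sub_eq_zero] using this
  obtain ⟨k, mk, rfl, rfl⟩ := exists_mem_of_psi_one_mul_eq mc hsym
  exact ⟨k, mk, e, me, α, β, by linear_combination h11⟩

theorem exists_of_PP_mul_add_QQ_mul_add_SS_mul_eq_zero {ω₁ ω₂ ω₃ : R3 2}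
    (h : PP 2 * ω₁ + QQ 2 * ω₂ + SS 2 * ω₃ = 0) :
    ∃ b ∈ coefRing2, ∃ a11 ∈ coefRing2, ∃ ρ₄ ρ₅ ρ₆ : R3 2,
      ω₁ - (-(χ 0 * χ 1 * b) - C (1/2 : ℂ) * (χ 0 ^ 2 - χ 1 ^ 2) * a11)
        = -(QQ 2 * ρ₄) - SS 2 * ρ₅ ∧
      ω₂ - (-(ψ 0 * ψ 1 * b) - C (1/2 : ℂ) * (ψ 0 ^ 2 - ψ 1 ^ 2) * a11)
        = PP 2 * ρ₄ - SS 2 * ρ₆ ∧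
      ω₃ - ((ψ 0 * χ 1 + χ 0 * ψ 1) * b + (ψ 0 * χ 0 - ψ 1 * χ 1) * a11)
        = PP 2 * ρ₅ + QQ 2 * ρ₆ := by
  obtain ⟨b, mb, a11, ma, ρ₅, ρ₆, h₃⟩ :=
    exists_of_SS_mul_eq (ω₃ := ω₃) (x := -ω₁) (y := -ω₂) (by linear_combination h)
  have hrep : PP 2 * (-(χ 0 * χ 1 * b) - C (1/2 : ℂ) * (χ 0 ^ 2 - χ 1 ^ 2) * a11)
      + QQ 2 * (-(ψ 0 * ψ 1 * b) - C (1/2 : ℂ) * (ψ 0 ^ 2 - ψ 1 ^ 2) * a11)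
      + SS 2 * ((ψ 0 * χ 1 + χ 0 * ψ 1) * b + (ψ 0 * χ 0 - ψ 1 * χ 1) * a11) = 0 :=
    congrFun (d3_cocycleRep 0 0 0 b a11) 0
  obtain ⟨t, ht₁, ht₂⟩ := isRelPrime_PP_QQ.exists_eq_mul_of_mul_eq PP_ne_zero
    (x := ω₁ - (-(χ 0 * χ 1 * b) - C (1/2 : ℂ) * (χ 0 ^ 2 - χ 1 ^ 2) * a11) + SS 2 * ρ₅)
    (y := -(ω₂ - (-(ψ 0 * ψ 1 * b) - C (1/2 : ℂ) * (ψ 0 ^ 2 - ψ 1 ^ 2) * a11) + SS 2 * ρ₆))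
    (by linear_combination h - hrep - SS 2 * h₃)
  exact ⟨b, mb, a11, ma, -t, ρ₅, ρ₆, by linear_combination ht₁, by linear_combination -ht₂,
    by linear_combination h₃⟩

theorem exists_of_add_eq_PP_QQ_SS {b00 b10 b01 ρ₁ ρ₂ ρ₃ : R3 2}
    (m00 : b00 ∈ coefRing2) (m10 : b10 ∈ coefRing2) (m01 : b01 ∈ coefRing2)
    (h : b00 + ψ 0 * b10 + χ 0 * b01 = PP 2 * ρ₁ + QQ 2 * ρ₂ + SS 2 * ρ₃) :
    b00 = 0 ∧ ∃ d10 ∈ coefRing2, ∃ d01 ∈ coefRing2,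
      ψ 0 * b10 + χ 0 * b01 = psiChiMinor * (ψ 1 * d10 - χ 1 * d01) := by
  have collapsed : ∀ s : ℂ, s * s = -1 → b00 + s • (ψ 1 * b10 + χ 1 * b01) = 0 := by
    intro s hs
    have h' := congrArg (collapse s s) h
    simp only [map_add, map_mul, collapse_PP hs, collapse_QQ s hs, collapse_SS hs,
      collapse_of_mem s s m00, collapse_of_mem s s m10, collapse_of_mem s s m01,
      collapse_psi_zero, collapse_chi_zero, zero_mul, add_zero] at h'
    rw [← C_mul']
    linear_combination h'
  obtain ⟨rfl, hsum⟩ := eq_zero_of_forall_add_smul_eq_zero collapsed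
  obtain ⟨k, mk, rfl, hk⟩ :=
    exists_mem_of_psi_one_mul_eq (b := b10) (neg_mem m01) (by linear_combination hsum)
  obtain ⟨d10, n10, d01, n01, rfl⟩ := exists_of_psiChiMinor_mul_eq mk
    (ρ₁ := ρ₁) (ρ₂ := ρ₂) (ρ₃ := ρ₃) (by rw [psiChiMinor]; linear_combination h + χ 0 * hk)
  exact ⟨rfl, d10, n10, d01, n01, by rw [psiChiMinor]; linear_combination -χ 0 * hk⟩

theorem exists_equiv_cocycleRep {ω : Om3 2} (hω : d3 ω = 0) :
    ∃ b00 ∈ coefRing2, ∃ b10 ∈ coefRing2, ∃ b01 ∈ coefRing2, ∃ b ∈ coefRing2,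
      ∃ a11 ∈ coefRing2, Equiv3 ω (cocycleRep b00 b10 b01 b a11) := by
  have h₀ : PP 2 * ω 1 + QQ 2 * ω 2 + SS 2 * ω 3 = 0 := congrFun hω 0
  have h₂ : PP 2 * ω 4 - SS 2 * ω 6 = 0 := congrFun hω 2
  have h₃ : PP 2 * ω 5 + QQ 2 * ω 6 = 0 := congrFun hω 3
  have h₇ : ω 7 = 0 := (mul_eq_zero.mp (congrFun hω 6)).resolve_left PP_ne_zero
  obtain ⟨t, e₄, e₅, e₆⟩ := exists_of_PP_mul_sub_SS_mul_eq_zero h₂ h₃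
  obtain ⟨b, mb, a11, ma, ρ₄, ρ₅, ρ₆, e₁, e₂, e₃⟩ :=
    exists_of_PP_mul_add_QQ_mul_add_SS_mul_eq_zero h₀
  obtain ⟨b00, b10, b01, b11, α, β, m00, m10, m01, m11, e₀⟩ := exists_normalForm (ω 0)
  -- `ψ 0 * χ 0 = SS 2 - ψ 1 * χ 1` moves the `ψ 0 * χ 0` term of the normal form into degree 0
  refine ⟨b00 - ψ 1 * χ 1 * b11, sub_mem m00 (mul_mem (mul_mem psi_one_mem chi_one_mem) m11),
    b10, m10, b01, m01, b, mb, a11, ma, ![0, α, β, b11, ρ₄, ρ₅, ρ₆, t], ?_⟩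
  funext i
  fin_cases i <;> simp [d3, cocycleRep, -one_div]
  · rw [SS_two]; linear_combination e₀
  exacts [e₁, e₂, e₃, e₄, e₅, e₆, h₇]

theorem cocycleRep_equiv_zero_iff {b00 b10 b01 b a11 : R3 2}
    (m00 : b00 ∈ coefRing2) (m10 : b10 ∈ coefRing2) (m01 : b01 ∈ coefRing2)
    (mb : b ∈ coefRing2) (ma : a11 ∈ coefRing2) :
    Equiv3 (cocycleRep b00 b10 b01 b a11) 0 ↔
      b00 = 0 ∧ b = 0 ∧ a11 = 0 ∧ ∃ d10 ∈ coefRing2, ∃ d01 ∈ coefRing2,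
        ψ 0 * b10 + χ 0 * b01 = psiChiMinor * (ψ 1 * d10 - χ 1 * d01) := by
  constructor
  · rintro ⟨ρ, hρ⟩
    have h₀ : b00 + ψ 0 * b10 + χ 0 * b01 - 0 = PP 2 * ρ 1 + QQ 2 * ρ 2 + SS 2 * ρ 3 :=
      congrFun hρ 0
    have h₃ : (ψ 0 * χ 1 + χ 0 * ψ 1) * b + (ψ 0 * χ 0 - ψ 1 * χ 1) * a11 - 0
        = PP 2 * ρ 5 + QQ 2 * ρ 6 := congrFun hρ 3
    rw [sub_zero] at h₀ h₃
    obtain ⟨-, hb, -, ha⟩ := normalForm_eq_zero (α := ρ 5) (β := ρ 6)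
      (neg_mem (mul_mem (mul_mem psi_one_mem chi_one_mem) ma))
      (mul_mem chi_one_mem mb) (mul_mem psi_one_mem mb) ma (by linear_combination h₃)
    obtain ⟨h00, hd⟩ := exists_of_add_eq_PP_QQ_SS m00 m10 m01 h₀
    exact ⟨h00, by simpa [χ, X_ne_zero] using hb, ha, hd⟩
  · rintro ⟨rfl, rfl, rfl, d10, -, d01, -, h⟩
    refine ⟨![0, -(χ 0 * d10), -(ψ 0 * d01), ψ 0 * d10 + χ 0 * d01, 0, 0, 0, 0], ?_⟩
    funext i
    fin_cases i <;> simp [d3, cocycleRep]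
    rw [psiChiMinor] at h
    rw [PP_two, QQ_two, SS_two]
    linear_combination h

end SusyCohomology

/-- for `N = 2`, (i) `dω = 0` iff
`ω ∼ b₀₀ + ψ₁b₁₀ + χ₁b₀₁ + (c̃₃(ψ₁χ₂ + χ₁ψ₂) − c̃₁χ₁χ₂ − c̃₂ψ₁ψ₂)b
     + (c̃₃(ψ₁χ₁ − ψ₂χ₂) − ½c̃₁(χ₁² − χ₂²) − ½c̃₂(ψ₁² − ψ₂²))a₁₁`
with coefficients in `ℂ[ψ₂, χ₂]`; (ii) such a combination is `∼ 0` iff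
`b₀₀ = b = a₁₁ = 0` and `ψ₁b₁₀ + χ₁b₀₁ = (ψ₁χ₂ − χ₁ψ₂)(ψ₂d₁₀ − χ₂d₀₁)`
for some `d₁₀, d₀₁ ∈ ℂ[ψ₂, χ₂]`. -/
theorem stmt7 :
    (∀ ω : Om3 2, d3 ω = 0 ↔
      ∃ b00 ∈ coefRing2, ∃ b10 ∈ coefRing2, ∃ b01 ∈ coefRing2,
      ∃ b ∈ coefRing2, ∃ a11 ∈ coefRing2,
        Equiv3 ω
          ![b00 + ψ 0 * b10 + χ 0 * b01,
            -(χ 0 * χ 1 * b) - C (1/2 : ℂ) * (χ 0 ^ 2 - χ 1 ^ 2) * a11,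
            -(ψ 0 * ψ 1 * b) - C (1/2 : ℂ) * (ψ 0 ^ 2 - ψ 1 ^ 2) * a11,
            (ψ 0 * χ 1 + χ 0 * ψ 1) * b + (ψ 0 * χ 0 - ψ 1 * χ 1) * a11,
            0, 0, 0, 0])
    ∧
    (∀ b00 b10 b01 b a11 : R3 2,
      b00 ∈ coefRing2 → b10 ∈ coefRing2 → b01 ∈ coefRing2 →
      b ∈ coefRing2 → a11 ∈ coefRing2 →
      (Equiv3
        (![b00 + ψ 0 * b10 + χ 0 * b01,
          -(χ 0 * χ 1 * b) - C (1/2 : ℂ) * (χ 0 ^ 2 - χ 1 ^ 2) * a11,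
          -(ψ 0 * ψ 1 * b) - C (1/2 : ℂ) * (ψ 0 ^ 2 - ψ 1 ^ 2) * a11,
          (ψ 0 * χ 1 + χ 0 * ψ 1) * b + (ψ 0 * χ 0 - ψ 1 * χ 1) * a11,
          0, 0, 0, 0] : Om3 2) 0 ↔
      (b00 = 0 ∧ b = 0 ∧ a11 = 0 ∧
        ∃ d10 ∈ coefRing2, ∃ d01 ∈ coefRing2,
          ψ 0 * b10 + χ 0 * b01
            = (ψ 0 * χ 1 - χ 0 * ψ 1) * (ψ 1 * d10 - χ 1 * d01)))) := by
  open SusyCohomology in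
  refine ⟨fun ω ↦ ⟨exists_equiv_cocycleRep, ?_⟩,
    fun _ _ _ _ _ ↦ cocycleRep_equiv_zero_iff⟩
  rintro ⟨b00, -, b10, -, b01, -, b, -, a11, -, h⟩
  exact h.d3_eq.trans (d3_cocycleRep b00 b10 b01 b a11)
end
end

section
/- Let N = 1 and set Θ := c̃₃ψ₁χ₁ − ½c̃₁χ₁² − ½c̃₂ψ₁² ∈ Ω. Then dΘ = 0, but there is no ρ ∈ Ω with Θ = dρ; i.e., Θ is a d-cocycle that is not a d-coboundary. -/
/-!
D = 3 supersymmetry algebra cohomology.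
`R3 N = ℂ[ψ₁,…,ψ_N, χ₁,…,χ_N]`, `Om3 N` is the free module with basis
`{1, c̃₁, c̃₂, c̃₃, c̃₁c̃₂, c̃₁c̃₃, c̃₂c̃₃, c̃₁c̃₂c̃₃}` (components 0,…,7), and
`d3` is the odd superderivation with `dc̃₁ = P`, `dc̃₂ = Q`, `dc̃₃ = S`, `d|_R = 0`.
-/

open MvPolynomial

noncomputable section

/-!
Restricting a polynomial identity to the `ψ`-axis (`χ = 0`) and to the `χ`-axis (`ψ = 0`) kills
`S = ψχ`. The `c̃₂`- and `c̃₁`-components of `Θ = dρ` then read `-½ψ² = ψ² ρ₄(ψ, 0)` and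
`-½χ² = -χ² ρ₄(0, χ)`, so the constant term of the `c̃₁c̃₂`-coefficient `ρ₄` would be both
`-½` and `½`.
-/

open scoped Polynomial

def theta : Om3 1 :=
  ![0, -(C (1/2 : ℂ) * χ 0 ^ 2), -(C (1/2 : ℂ) * ψ 0 ^ 2), ψ 0 * χ 0,
    0, 0, 0, 0]

theorem d3_theta : d3 theta = 0 := by
  have half : (C (2⁻¹ : ℂ) : R3 1) * 2 = 1 := by
    rw [← map_ofNat C 2, ← map_mul]; norm_num
  ext1 i
  fin_cases i <;> simp [d3, theta, PP, QQ, SS]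
  linear_combination (-(ψ 0 ^ 2 * χ 0 ^ 2)) * half

def psiAxis : R3 1 →ₐ[ℂ] ℂ[X] := aeval (Sum.elim (fun _ => Polynomial.X) 0)

def chiAxis : R3 1 →ₐ[ℂ] ℂ[X] := aeval (Sum.elim 0 (fun _ => Polynomial.X))

theorem eval_zero_aeval {σ R : Type*} [CommRing R] {f : σ → R[X]} (hf : ∀ i, (f i).eval 0 = 0)
    (p : MvPolynomial σ R) : (aeval f p).eval 0 = constantCoeff p := by
  induction p using MvPolynomial.induction_on with
  | C a => simp
  | add p q hp hq => simp [hp, hq]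
  | mul_X p i _ => simp [hf]

theorem eval_zero_psiAxis (p : R3 1) : (psiAxis p).eval 0 = constantCoeff p :=
  eval_zero_aeval (by rintro (_ | _) <;> simp) p

theorem eval_zero_chiAxis (p : R3 1) : (chiAxis p).eval 0 = constantCoeff p :=
  eval_zero_aeval (by rintro (_ | _) <;> simp) p

theorem constantCoeff_four_eq_neg_half {ρ : Om3 1} (h : d3 ρ 2 = theta 2) :
    constantCoeff (ρ 4) = -(1/2) := by
  have h' := congrArg psiAxis h
  simp only [psiAxis, d3, PP, SS, theta, ψ, χ, Fin.sum_univ_one, Matrix.cons_val, map_sub,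
    map_mul, map_pow, map_neg, aeval_X, algHom_C, Polynomial.algebraMap_eq, Sum.elim_inl,
    Sum.elim_inr, Pi.zero_apply, mul_zero, zero_mul, sub_zero] at h'
  have hρ : psiAxis (ρ 4) = Polynomial.C (-(1/2)) :=
    mul_left_cancel₀ (pow_ne_zero 2 Polynomial.X_ne_zero) (h'.trans (by simp))
  rw [← eval_zero_psiAxis, hρ, Polynomial.eval_C]

theorem constantCoeff_four_eq_half {ρ : Om3 1} (h : d3 ρ 1 = theta 1) :
    constantCoeff (ρ 4) = 1/2 := by
  have h' := congrArg chiAxis h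
  simp only [chiAxis, d3, QQ, SS, theta, ψ, χ, Fin.sum_univ_one, Matrix.cons_val_one,
    Matrix.cons_val_zero, map_sub, map_mul, map_pow, map_neg, aeval_X, algHom_C,
    Polynomial.algebraMap_eq, Sum.elim_inl, Sum.elim_inr, Pi.zero_apply, zero_mul, sub_zero,
    neg_inj] at h'
  have hρ : chiAxis (ρ 4) = Polynomial.C (1/2) :=
    mul_left_cancel₀ (pow_ne_zero 2 Polynomial.X_ne_zero) (h'.trans (by simp))
  rw [← eval_zero_chiAxis, hρ, Polynomial.eval_C]

/-- for `N = 1`, `Θ = c̃₃ψ₁χ₁ − ½c̃₁χ₁² − ½c̃₂ψ₁²` is a `d`-cocycle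
that is not a `d`-coboundary. -/
theorem stmt16 :
    d3 (![0, -(C (1/2 : ℂ) * χ 0 ^ 2), -(C (1/2 : ℂ) * ψ 0 ^ 2), ψ 0 * χ 0,
          0, 0, 0, 0] : Om3 1) = 0
    ∧
    ¬ ∃ ρ : Om3 1,
        (![0, -(C (1/2 : ℂ) * χ 0 ^ 2), -(C (1/2 : ℂ) * ψ 0 ^ 2), ψ 0 * χ 0,
            0, 0, 0, 0] : Om3 1) = d3 ρ := by
  refine ⟨d3_theta, ?_⟩
  rintro ⟨ρ, h⟩
  have hneg := constantCoeff_four_eq_neg_half (congrFun h 2).symm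
  have hpos := constantCoeff_four_eq_half (congrFun h 1).symm
  norm_num [hneg] at hpos
end
end
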